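/- arXiv:1907.04541 — 6 statements merged into one kernel-verified Lean document; each statement's English description precedes it below -/
import Mathlib

section
/- If f : [0,∞) → ℝ is piecewise continuous, Ψ : [0,∞) → ℝ is a C¹ non-negative increasing function with Ψ(0) = 0, and f is of Ψ-exponential order c > 0 (i.e., there exist M, T > 0 with |f(t)| ≤ M·e^{c·Ψ(t)} for all t > T), then for every real s > c the integral ∫₀^∞ e^{-s·Ψ(t)} Ψ'(t) f(t) dt converges absolutely, and moreover |∫₀^∞ e^{-s·Ψ(t)} Ψ'(t) f(t) dt| ≤ M/(s−c) when the bound holds for all t ≥ 0. -/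
/-!
Writing `a = s - c`, the bound on `f` dominates the integrand by `M e^{-aΨ} Ψ'`, the derivative
of `-e^{-aΨ} / a`. That function is monotone and bounded above, so its derivative is integrable on
`(0, ∞)` with integral at most `e^{-aΨ(0)} / a = 1 / a`. On `[0, T]` the integrand is continuous.
-/

open MeasureTheory Real Set

/-- The generalised Laplace transform of `f` with respect to `Ψ`. -/
noncomputable def psiLaplace (Ψ f : ℝ → ℝ) (s : ℝ) : ℝ :=
  ∫ t in Ioi (0 : ℝ), Real.exp (-s * Ψ t) * deriv Ψ t * f t

open Filter Topology Asymptotics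

lemma MonotoneOn.deriv_nonneg_of_isOpen {g : ℝ → ℝ} {s : Set ℝ} {x : ℝ}
    (hg : MonotoneOn g s) (hs : IsOpen s) (hx : x ∈ s) : 0 ≤ deriv g x := by
  rw [← derivWithin_of_isOpen hs hx]
  exact hg.derivWithin_nonneg

lemma AntitoneOn.exists_tendsto_atTop_of_nonneg {g : ℝ → ℝ} {b : ℝ}
    (hg : AntitoneOn g (Ici b)) (hpos : ∀ x ≥ b, 0 ≤ g x) :
    ∃ l, 0 ≤ l ∧ Tendsto g atTop (𝓝 l) := by
  have hanti : Antitone fun x => g (max x b) := fun x y hxy =>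
    hg (le_max_right x b) (le_max_right y b) (max_le_max hxy le_rfl)
  have hbdd : BddBelow (range fun x => g (max x b)) :=
    ⟨0, by rintro _ ⟨x, rfl⟩; exact hpos _ (le_max_right x b)⟩
  refine ⟨_, le_ciInf fun x => hpos _ (le_max_right x b), ?_⟩
  refine (tendsto_atTop_ciInf hanti hbdd).congr' ?_
  filter_upwards [Ici_mem_atTop b] with x hx
  rw [max_eq_left hx]

section ExpNegMulDeriv

variable {φ : ℝ → ℝ} {a b : ℝ}

lemma hasDerivAt_neg_exp_neg_mul_div {x : ℝ} (hφ : DifferentiableAt ℝ φ x) (ha : a ≠ 0) :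
    HasDerivAt (fun t => -(exp (-a * φ t) / a)) (exp (-a * φ x) * deriv φ x) x := by
  refine (((hφ.hasDerivAt.const_mul (-a)).exp).div_const a).neg.congr_deriv ?_
  field_simp

lemma exists_tendsto_neg_exp_neg_mul_div (hmono : MonotoneOn φ (Ici b)) (ha : 0 < a) :
    ∃ l, l ≤ 0 ∧ Tendsto (fun t => -(exp (-a * φ t) / a)) atTop (𝓝 l) := by
  have hanti : AntitoneOn (fun t => exp (-a * φ t)) (Ici b) := fun x hx y hy hxy => by
    simp only [exp_le_exp]
    nlinarith [hmono hx hy hxy]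
  obtain ⟨l, hl, hlim⟩ := hanti.exists_tendsto_atTop_of_nonneg fun x _ => (exp_pos _).le
  exact ⟨-(l / a), by simp only [neg_nonpos]; positivity, (hlim.div_const a).neg⟩

lemma exp_neg_mul_mul_deriv_nonneg (hmono : MonotoneOn φ (Ici b)) {x : ℝ} (hx : x ∈ Ioi b) :
    0 ≤ exp (-a * φ x) * deriv φ x :=
  mul_nonneg (exp_pos _).le
    ((hmono.mono Ioi_subset_Ici_self).deriv_nonneg_of_isOpen isOpen_Ioi hx)

lemma integrableOn_exp_neg_mul_mul_deriv (hφ : ∀ x ∈ Ici b, DifferentiableAt ℝ φ x)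
    (hmono : MonotoneOn φ (Ici b)) (ha : 0 < a) :
    IntegrableOn (fun t => exp (-a * φ t) * deriv φ t) (Ioi b) := by
  obtain ⟨l, -, hlim⟩ := exists_tendsto_neg_exp_neg_mul_div hmono ha
  exact integrableOn_Ioi_deriv_of_nonneg' (fun x hx => hasDerivAt_neg_exp_neg_mul_div (hφ x hx)
    ha.ne') (fun x => exp_neg_mul_mul_deriv_nonneg hmono) hlim

lemma integral_exp_neg_mul_mul_deriv_le (hφ : ∀ x ∈ Ici b, DifferentiableAt ℝ φ x)
    (hmono : MonotoneOn φ (Ici b)) (ha : 0 < a) :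
    ∫ t in Ioi b, exp (-a * φ t) * deriv φ t ≤ exp (-a * φ b) / a := by
  obtain ⟨l, hl, hlim⟩ := exists_tendsto_neg_exp_neg_mul_div hmono ha
  rw [integral_Ioi_of_hasDerivAt_of_nonneg' (fun x hx => hasDerivAt_neg_exp_neg_mul_div
    (hφ x hx) ha.ne') (fun x => exp_neg_mul_mul_deriv_nonneg hmono) hlim]
  linarith

end ExpNegMulDeriv

lemma norm_exp_neg_mul_mul_le {s c M p d y : ℝ} (hd : 0 ≤ d) (hy : |y| ≤ M * exp (c * p)) :
    ‖exp (-s * p) * d * y‖ ≤ M * (exp (-(s - c) * p) * d) := by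
  have hexp : exp (-s * p) * exp (c * p) = exp (-(s - c) * p) := by rw [← exp_add]; ring_nf
  rw [Real.norm_eq_abs, abs_mul, abs_mul, abs_of_pos (exp_pos _), abs_of_nonneg hd, ← hexp]
  calc exp (-s * p) * d * |y| ≤ exp (-s * p) * d * (M * exp (c * p)) := by gcongr
    _ = M * (exp (-s * p) * exp (c * p) * d) := by ring

theorem existence_of_generalised_laplace_transform_general
    (Ψ f : ℝ → ℝ) (c M T s : ℝ)
    (hΨC1 : ContDiff ℝ 1 Ψ)
    (hΨmono : StrictMonoOn Ψ (Ici 0))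
    (hΨ0 : Ψ 0 = 0)
    (hf : ContinuousOn f (Ici 0))
    (hM : 0 < M)
    (hbound : ∀ t > T, |f t| ≤ M * Real.exp (c * Ψ t))
    (hs : c < s) :
    IntegrableOn (fun t => Real.exp (-s * Ψ t) * deriv Ψ t * f t) (Ioi 0) ∧
      ((∀ t ≥ (0:ℝ), |f t| ≤ M * Real.exp (c * Ψ t)) →
        |psiLaplace Ψ f s| ≤ M / (s - c)) := by
  have hΨ : ∀ x ∈ Ici (0 : ℝ), DifferentiableAt ℝ Ψ x :=
    fun x _ => hΨC1.differentiable one_ne_zero x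
  have hmono := hΨmono.monotoneOn
  have hΨ' : ∀ t ∈ Ioi (0 : ℝ), 0 ≤ deriv Ψ t :=
    fun t => (hmono.mono Ioi_subset_Ici_self).deriv_nonneg_of_isOpen isOpen_Ioi
  have ha : 0 < s - c := sub_pos.mpr hs
  set F := fun t => exp (-s * Ψ t) * deriv Ψ t * f t
  set G := fun t => exp (-(s - c) * Ψ t) * deriv Ψ t
  have hG : IntegrableOn G (Ioi 0) := integrableOn_exp_neg_mul_mul_deriv hΨ hmono ha
  have hdom : ∀ t > 0, |f t| ≤ M * exp (c * Ψ t) → ‖F t‖ ≤ M * G t :=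
    fun t ht => norm_exp_neg_mul_mul_le (hΨ' t ht)
  have hcont : ContinuousOn F (Ici 0) :=
    (((continuous_const.mul hΨC1.continuous).rexp.mul
      (hΨC1.continuous_deriv le_rfl)).continuousOn).mul hf
  have hbigO : F =O[atTop] G := by
    refine IsBigO.of_bound M ?_
    filter_upwards [Ioi_mem_atTop (max T 0)] with t ht
    rw [mem_Ioi, max_lt_iff] at ht
    exact (hdom t ht.2 (hbound t ht.1)).trans (mul_le_mul_of_nonneg_left (le_abs_self _) hM.le)
  have hF : IntegrableOn F (Ioi 0) :=
    ((hcont.locallyIntegrableOn measurableSet_Ici).integrableOn_of_isBigO_atTop hbigO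
      ⟨Ioi 0, Ioi_mem_atTop 0, hG⟩).mono_set Ioi_subset_Ici_self
  refine ⟨hF, fun hbound₀ => ?_⟩
  calc |psiLaplace Ψ f s| ≤ ∫ t in Ioi 0, M * G t :=
        norm_integral_le_of_norm_le (hG.const_mul M)
          ((ae_restrict_mem measurableSet_Ioi).mono fun t ht => hdom t ht (hbound₀ t ht.le))
    _ = M * ∫ t in Ioi 0, G t := integral_const_mul M G
    _ ≤ M * (exp (-(s - c) * Ψ 0) / (s - c)) := by
        gcongr; exact integral_exp_neg_mul_mul_deriv_le hΨ hmono ha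
    _ = M / (s - c) := by rw [hΨ0, mul_zero, exp_zero, mul_one_div]

theorem existence_of_generalised_laplace_transform
    (Ψ f : ℝ → ℝ) (c M T s : ℝ)
    (hΨC1 : ContDiff ℝ 1 Ψ)
    (hΨmono : StrictMonoOn Ψ (Ici 0))
    (hΨnonneg : ∀ t ≥ (0:ℝ), 0 ≤ Ψ t)
    (hΨ0 : Ψ 0 = 0)
    (hf : ContinuousOn f (Ici 0))
    (hc : 0 < c) (hM : 0 < M) (hT : 0 < T)
    (hbound : ∀ t > T, |f t| ≤ M * Real.exp (c * Ψ t))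
    (hs : c < s) :
    IntegrableOn (fun t => Real.exp (-s * Ψ t) * deriv Ψ t * f t) (Ioi 0) ∧
      ((∀ t ≥ (0:ℝ), |f t| ≤ M * Real.exp (c * Ψ t)) →
        |psiLaplace Ψ f s| ≤ M / (s - c)) :=
  existence_of_generalised_laplace_transform_general Ψ f c M T s hΨC1 hΨmono hΨ0 hf hM hbound hs
end

section
/- Under the hypotheses that f is continuous on [0,∞), of Ψ-exponential order c > 0 with |f(t)| ≤ M·e^{c·Ψ(t)} for all t ≥ 0, and Ψ is C¹, increasing, non-negative with Ψ(0)=0, the generalised Laplace transform L_Ψ{f}(s) tends to 0 as s → ∞. -/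
open MeasureTheory Real Set Filter

/-!
Put `a = s - c`. The growth bound gives `|e^{-sΨ} Ψ' f| ≤ M e^{-aΨ} Ψ'`, and since `Ψ' ≥ 0` the
majorant is the derivative of the increasing function `-e^{-aΨ} / a ≤ 0`, so its integral over
`(0, ∞)` is at most `e^{-aΨ(0)} / a = 1 / a`. Hence `|L_Ψ{f}(s)| ≤ M / (s - c) → 0`.
-/

theorem MonotoneOn.deriv_nonneg_of_mem_nhds {g : ℝ → ℝ} {s : Set ℝ} {x : ℝ}
    (hg : MonotoneOn g s) (hs : s ∈ nhds x) : 0 ≤ deriv g x :=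
  (derivWithin_of_mem_nhds (f := g) hs) ▸ hg.derivWithin_nonneg

theorem MonotoneOn.exists_tendsto_atTop_of_bddAbove {f : ℝ → ℝ} {a : ℝ}
    (hf : MonotoneOn f (Ici a)) (hb : BddAbove (f '' Ici a)) :
    ∃ l, Tendsto f atTop (nhds l) := by
  have hmono : Monotone fun t => f (max t a) := fun x y hxy =>
    hf (le_max_right x a) (le_max_right y a) (max_le_max hxy le_rfl)
  have hbdd : BddAbove (range fun t => f (max t a)) :=
    hb.mono (range_subset_iff.2 fun t => mem_image_of_mem f (le_max_right t a))
  refine ⟨_, (tendsto_atTop_ciSup hmono hbdd).congr' ?_⟩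
  filter_upwards [eventually_ge_atTop a] with t ht
  rw [max_eq_left ht]

theorem integrableOn_exp_neg_mul_mul_deriv_and_integral_le {Ψ : ℝ → ℝ} {a x₀ : ℝ} (ha : 0 < a)
    (hΨ : ∀ t ∈ Ici x₀, DifferentiableAt ℝ Ψ t) (hmono : MonotoneOn Ψ (Ici x₀)) :
    IntegrableOn (fun t => exp (-a * Ψ t) * deriv Ψ t) (Ioi x₀) ∧
      ∫ t in Ioi x₀, exp (-a * Ψ t) * deriv Ψ t ≤ exp (-a * Ψ x₀) / a := by
  set G : ℝ → ℝ := fun t => -exp (-a * Ψ t) / a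
  have hG : ∀ t ∈ Ici x₀, HasDerivAt G (exp (-a * Ψ t) * deriv Ψ t) t := fun t ht => by
    refine ((((hΨ t ht).hasDerivAt.const_mul (-a)).exp.neg).div_const a).congr_deriv ?_
    field_simp
  have hG_nonpos : ∀ t, G t ≤ 0 := fun t =>
    div_nonpos_of_nonpos_of_nonneg (neg_nonpos.2 (exp_pos _).le) ha.le
  have hG_mono : MonotoneOn G (Ici x₀) := fun x hx y hy hxy =>
    div_le_div_of_nonneg_right
      (neg_le_neg (exp_le_exp.2 (by nlinarith [hmono hx hy hxy]))) ha.le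
  have hderiv_nonneg : ∀ t ∈ Ioi x₀, 0 ≤ exp (-a * Ψ t) * deriv Ψ t := fun t ht =>
    mul_nonneg (exp_pos _).le (hmono.deriv_nonneg_of_mem_nhds (Ici_mem_nhds ht))
  obtain ⟨l, hl⟩ := hG_mono.exists_tendsto_atTop_of_bddAbove
    ⟨0, forall_mem_image.2 fun t _ => hG_nonpos t⟩
  refine ⟨integrableOn_Ioi_deriv_of_nonneg' hG hderiv_nonneg hl, ?_⟩
  rw [integral_Ioi_of_hasDerivAt_of_nonneg' hG hderiv_nonneg hl]
  have hl_nonpos : l ≤ 0 := le_of_tendsto' hl hG_nonpos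
  have hG₀ : G x₀ = -(exp (-a * Ψ x₀) / a) := neg_div _ _
  linarith

theorem norm_psiLaplace_le {Ψ f : ℝ → ℝ} {c M s : ℝ} (hΨ : Differentiable ℝ Ψ)
    (hmono : MonotoneOn Ψ (Ici 0)) (hΨ0 : Ψ 0 = 0) (hM : 0 ≤ M)
    (hbound : ∀ t > (0 : ℝ), |f t| ≤ M * exp (c * Ψ t)) (hs : c < s) :
    ‖psiLaplace Ψ f s‖ ≤ M / (s - c) := by
  obtain ⟨hint, hle⟩ :=
    integrableOn_exp_neg_mul_mul_deriv_and_integral_le (sub_pos.2 hs) (fun t _ => hΨ t) hmono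
  rw [hΨ0, mul_zero, exp_zero] at hle
  have hpointwise : ∀ t ∈ Ioi (0 : ℝ), ‖exp (-s * Ψ t) * deriv Ψ t * f t‖ ≤
      M * (exp (-(s - c) * Ψ t) * deriv Ψ t) := fun t ht => by
    have hΨ' : 0 ≤ deriv Ψ t := hmono.deriv_nonneg_of_mem_nhds (Ici_mem_nhds ht)
    rw [norm_mul, norm_mul, norm_of_nonneg (exp_pos _).le, norm_of_nonneg hΨ',
      Real.norm_eq_abs]
    calc exp (-s * Ψ t) * deriv Ψ t * |f t|
        ≤ exp (-s * Ψ t) * deriv Ψ t * (M * exp (c * Ψ t)) := by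
          gcongr
          exact hbound t ht
      _ = M * (exp (-(s - c) * Ψ t) * deriv Ψ t) := by
          rw [show -(s - c) * Ψ t = -s * Ψ t + c * Ψ t by ring, exp_add]
          ring
  calc ‖psiLaplace Ψ f s‖
      ≤ ∫ t in Ioi (0 : ℝ), M * (exp (-(s - c) * Ψ t) * deriv Ψ t) :=
        norm_integral_le_of_norm_le (hint.const_mul M)
          ((ae_restrict_iff' measurableSet_Ioi).2 (ae_of_all _ hpointwise))
    _ ≤ M * (1 / (s - c)) := by
        rw [integral_const_mul]
        exact mul_le_mul_of_nonneg_left hle hM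
    _ = M / (s - c) := mul_one_div M (s - c)

theorem generalised_laplace_tendsto_zero_general
    (Ψ f : ℝ → ℝ) (c M : ℝ)
    (hΨC1 : ContDiff ℝ 1 Ψ)
    (hΨmono : StrictMonoOn Ψ (Ici 0))
    (hΨ0 : Ψ 0 = 0)
    (hM : 0 < M)
    (hbound : ∀ t ≥ (0:ℝ), |f t| ≤ M * Real.exp (c * Ψ t)) :
    Tendsto (fun s => psiLaplace Ψ f s) atTop (nhds 0) := by
  have hlim : Tendsto (fun s : ℝ => M / (s - c)) atTop (nhds 0) :=
    tendsto_const_nhds.div_atTop (tendsto_atTop_add_const_right _ (-c) tendsto_id)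
  refine squeeze_zero_norm' ?_ hlim
  filter_upwards [eventually_gt_atTop c] with s hs
  exact norm_psiLaplace_le (hΨC1.differentiable one_ne_zero) hΨmono.monotoneOn hΨ0 hM.le
    (fun t ht => hbound t ht.le) hs

theorem generalised_laplace_tendsto_zero
    (Ψ f : ℝ → ℝ) (c M : ℝ)
    (hΨC1 : ContDiff ℝ 1 Ψ)
    (hΨmono : StrictMonoOn Ψ (Ici 0))
    (hΨnonneg : ∀ t ≥ (0:ℝ), 0 ≤ Ψ t)
    (hΨ0 : Ψ 0 = 0)
    (hf : ContinuousOn f (Ici 0))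
    (hc : 0 < c) (hM : 0 < M)
    (hbound : ∀ t ≥ (0:ℝ), |f t| ≤ M * Real.exp (c * Ψ t)) :
    Tendsto (fun s => psiLaplace Ψ f s) atTop (nhds 0) :=
  generalised_laplace_tendsto_zero_general Ψ f c M hΨC1 hΨmono hΨ0 hM hbound
end

section
/- For μ > 0, λ ∈ ℝ, and s > 0 with |λ|/s^μ < 1, and Ψ a C¹ increasing bijection of [0,∞) with Ψ(0)=0, the generalised Laplace transform of t ↦ E_μ(λ·(Ψ(t))^μ) equals s^{μ-1}/(s^μ − λ), where E_μ(z) = Σ_{j≥0} z^j/Γ(μj+1) is the Mittag-Leffler function. -/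
open MeasureTheory Real Set

/-- The two-parameter Mittag-Leffler function (one-parameter when ν = 1). -/
noncomputable def mittagLeffler (μ ν z : ℝ) : ℝ :=
  ∑' j : ℕ, z ^ j / Real.Gamma (μ * j + ν)

/-!
The substitution `u = Ψ t` (legitimate since `Ψ` is increasing, so `|Ψ'| = Ψ'`, and maps `(0, ∞)`
onto itself) reduces the claim to the ordinary Laplace transform of `u ↦ E_μ(λ u^μ)`. Expanding
`E_μ` and integrating termwise with Euler's integral `∫ u^{μj} e^{-su} du = Γ(μj+1) / s^{μj+1}`
leaves the geometric series `∑ (λ / s^μ)^j / s = s^{μ-1} / (s^μ - λ)`. The same computation with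
`|λ|` in place of `λ` shows that the series of integrals of absolute values converges, which
justifies the interchange of sum and integral.
-/

lemma Set.BijOn.image_Ioi {α β : Type*} [LinearOrder α] [LinearOrder β] {f : α → β} {a : α}
    {b : β} (h : BijOn f (Ici a) (Ici b)) (ha : f a = b) : f '' Ioi a = Ioi b := by
  rw [← Ici_sdiff_left, h.injOn.image_sdiff_subset (singleton_subset_iff.2 self_mem_Ici),
    h.image_eq, image_singleton, ha, Ici_sdiff_left]

lemma setIntegral_deriv_smul_comp_of_strictMonoOn {E : Type*} [NormedAddCommGroup E]
    [NormedSpace ℝ E] {f : ℝ → ℝ} {s : Set ℝ} (hs : IsOpen s) (hf : DifferentiableOn ℝ f s)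
    (hmono : StrictMonoOn f s) (g : ℝ → E) :
    ∫ x in s, deriv f x • g (f x) = ∫ y in f '' s, g y := by
  have hderiv : ∀ x ∈ s, HasDerivWithinAt f (deriv f x) s x := fun x hx =>
    (hf.differentiableAt (hs.mem_nhds hx)).hasDerivAt.hasDerivWithinAt
  rw [integral_image_eq_integral_abs_deriv_smul hs.measurableSet hderiv hmono.injOn]
  refine setIntegral_congr_fun hs.measurableSet fun x hx => ?_
  have hnonneg : 0 ≤ deriv f x := by
    rw [← derivWithin_of_isOpen hs hx]
    exact hmono.monotoneOn.derivWithin_nonneg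
  rw [abs_of_nonneg hnonneg]

section LaplaceMittagLeffler

variable {μ s : ℝ}

noncomputable def laplaceMittagLefflerTerm (μ s c : ℝ) (j : ℕ) (u : ℝ) : ℝ :=
  c ^ j / Gamma (μ * j + 1) * (u ^ (μ * j) * exp (-(s * u)))

lemma exp_neg_mul_mul_mittagLeffler_eq_tsum {u : ℝ} (hu : 0 ≤ u) (c : ℝ) :
    exp (-s * u) * mittagLeffler μ 1 (c * u ^ μ) =
      ∑' j, laplaceMittagLefflerTerm μ s c j u := by
  rw [mittagLeffler, ← tsum_mul_left]
  refine tsum_congr fun j => ?_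
  rw [laplaceMittagLefflerTerm, mul_pow, ← rpow_natCast (u ^ μ), ← rpow_mul hu, neg_mul]
  ring

lemma norm_laplaceMittagLefflerTerm (hμ : 0 ≤ μ) {u : ℝ} (hu : 0 ≤ u) (c : ℝ) (j : ℕ) :
    ‖laplaceMittagLefflerTerm μ s c j u‖ = laplaceMittagLefflerTerm μ s |c| j u := by
  have hΓ : 0 < Gamma (μ * j + 1) := Gamma_pos_of_pos (by positivity)
  rw [laplaceMittagLefflerTerm, laplaceMittagLefflerTerm, Real.norm_eq_abs, abs_mul, abs_div,
    abs_pow, abs_of_pos hΓ, abs_of_nonneg (mul_nonneg (rpow_nonneg hu _) (exp_pos _).le)]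

lemma integrableOn_laplaceMittagLefflerTerm (hμ : 0 ≤ μ) (hs : 0 < s) (c : ℝ) (j : ℕ) :
    IntegrableOn (laplaceMittagLefflerTerm μ s c j) (Ioi 0) := by
  have h := integrableOn_rpow_mul_exp_neg_mul_rpow (s := μ * j) (p := 1) (b := s)
    (by linarith [show 0 ≤ μ * j by positivity]) one_pos hs
  simp only [rpow_one, neg_mul] at h
  exact h.const_mul _

lemma integral_laplaceMittagLefflerTerm (hμ : 0 ≤ μ) (hs : 0 < s) (c : ℝ) (j : ℕ) :
    ∫ u in Ioi 0, laplaceMittagLefflerTerm μ s c j u = c ^ j / s ^ (μ * j + 1) := by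
  have hΓ : 0 < Gamma (μ * j + 1) := Gamma_pos_of_pos (by positivity)
  have h := integral_rpow_mul_exp_neg_mul_Ioi (a := μ * j + 1) (by positivity) hs
  rw [add_sub_cancel_right, div_rpow zero_le_one hs.le, one_rpow] at h
  simp only [laplaceMittagLefflerTerm]
  rw [integral_const_mul, h]
  field_simp

lemma hasSum_pow_div_rpow (hs : 0 < s) {c : ℝ} (hc : |c| / s ^ μ < 1) :
    HasSum (fun j : ℕ => c ^ j / s ^ (μ * j + 1)) (s ^ (μ - 1) / (s ^ μ - c)) := by
  have hsμ : 0 < s ^ μ := rpow_pos_of_pos hs μ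
  have hgeom := (hasSum_geometric_of_abs_lt_one (r := c / s ^ μ)
    (by rwa [abs_div, abs_of_pos hsμ])).div_const s
  have hterm : (fun j : ℕ => c ^ j / s ^ (μ * j + 1)) = fun j => (c / s ^ μ) ^ j / s := by
    funext j
    rw [rpow_add hs, rpow_one, rpow_mul hs.le, rpow_natCast, div_pow, div_div]
  have hsum : s ^ (μ - 1) / (s ^ μ - c) = (1 - c / s ^ μ)⁻¹ / s := by
    rw [rpow_sub_one hs.ne', one_sub_div hsμ.ne', inv_div, div_right_comm]
  rw [hterm, hsum]
  exact hgeom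

lemma integral_exp_neg_mul_mittagLeffler (hμ : 0 ≤ μ) (hs : 0 < s) {c : ℝ}
    (hc : |c| / s ^ μ < 1) :
    ∫ u in Ioi 0, exp (-s * u) * mittagLeffler μ 1 (c * u ^ μ) =
      s ^ (μ - 1) / (s ^ μ - c) := by
  have hnorm : Summable fun j => ∫ u in Ioi 0, ‖laplaceMittagLefflerTerm μ s c j u‖ := by
    have h := (hasSum_pow_div_rpow (c := |c|) hs (by rwa [abs_abs])).summable
    refine h.congr fun j => ?_
    rw [← integral_laplaceMittagLefflerTerm hμ hs]
    exact setIntegral_congr_fun measurableSet_Ioi fun u hu =>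
      (norm_laplaceMittagLefflerTerm hμ (le_of_lt hu) c j).symm
  calc ∫ u in Ioi 0, exp (-s * u) * mittagLeffler μ 1 (c * u ^ μ)
      = ∫ u in Ioi 0, ∑' j, laplaceMittagLefflerTerm μ s c j u :=
        setIntegral_congr_fun measurableSet_Ioi fun u hu =>
          exp_neg_mul_mul_mittagLeffler_eq_tsum (le_of_lt hu) c
    _ = ∑' j, ∫ u in Ioi 0, laplaceMittagLefflerTerm μ s c j u :=
        (integral_tsum_of_summable_integral_norm
          (integrableOn_laplaceMittagLefflerTerm hμ hs c) hnorm).symm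
    _ = ∑' j : ℕ, c ^ j / s ^ (μ * j + 1) :=
        tsum_congr (integral_laplaceMittagLefflerTerm hμ hs c)
    _ = s ^ (μ - 1) / (s ^ μ - c) := (hasSum_pow_div_rpow hs hc).tsum_eq

end LaplaceMittagLeffler

theorem generalised_laplace_of_mittagLeffler
    (Ψ : ℝ → ℝ) (μ lam s : ℝ)
    (hΨC1 : ContDiff ℝ 1 Ψ)
    (hΨmono : StrictMonoOn Ψ (Ici 0))
    (hΨ0 : Ψ 0 = 0)
    (hbij : BijOn Ψ (Ici 0) (Ici 0))
    (hμ : 0 < μ) (hs : 0 < s) (hconv : |lam| / s ^ μ < 1) :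
    (∫ t in Ioi (0:ℝ), Real.exp (-s * Ψ t) * deriv Ψ t *
        mittagLeffler μ 1 (lam * (Ψ t) ^ μ)) =
      s ^ (μ - 1) / (s ^ μ - lam) := by
  calc (∫ t in Ioi (0:ℝ), exp (-s * Ψ t) * deriv Ψ t * mittagLeffler μ 1 (lam * (Ψ t) ^ μ))
      = ∫ t in Ioi 0, deriv Ψ t • (exp (-s * Ψ t) * mittagLeffler μ 1 (lam * (Ψ t) ^ μ)) := by
        congr with t
        rw [smul_eq_mul]
        ring
    _ = ∫ u in Ψ '' Ioi 0, exp (-s * u) * mittagLeffler μ 1 (lam * u ^ μ) :=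
        setIntegral_deriv_smul_comp_of_strictMonoOn isOpen_Ioi
          (hΨC1.differentiable one_ne_zero).differentiableOn (hΨmono.mono Ioi_subset_Ici_self)
          fun u => exp (-s * u) * mittagLeffler μ 1 (lam * u ^ μ)
    _ = s ^ (μ - 1) / (s ^ μ - lam) := by
        rw [hbij.image_Ioi hΨ0, integral_exp_neg_mul_mittagLeffler hμ.le hs hconv]
end

section
/- Let f, g be piecewise continuous on [0,∞), of Ψ-exponential order c > 0, and Ψ a C¹ increasing bijection of [0,∞) with Ψ(0)=0. If L_Ψ{f}(s) = L_Ψ{g}(s) for all s > c, then f(t) = g(t) for all t ≥ 0 (at points of continuity). -/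
/-!
The substitution `u = Ψ t` turns `psiLaplace Ψ f` into the ordinary Laplace transform of
`f ∘ Ψ⁻¹`, so it suffices to prove uniqueness for the Laplace transform. There the substitution
`x = exp (-u)` turns the Laplace transform of `φ` at `s = n + c + 2` into the `n`-th moment of
`x ^ (c + 1) * φ (-log x)`, a continuous function on `[0, 1]` (the growth bound on `φ` makes it
`O(x)` at `0`). By Weierstrass approximation, a continuous function whose moments all vanish is
orthogonal to itself, hence zero.
-/

open MeasureTheory Real Set

open Filter Topology Function

theorem StrictMonoOn.strictMonoOn_invFunOn {α β : Type*} [LinearOrder α] [Nonempty α]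
    [Preorder β] {f : α → β} {s : Set α} {t : Set β} (hf : StrictMonoOn f s)
    (hbij : BijOn f s t) : StrictMonoOn (invFunOn f s) t := by
  intro u hu v hv huv
  have hinv := hbij.invOn_invFunOn
  have hmaps := hbij.surjOn.mapsTo_invFunOn
  rwa [← hf.lt_iff_lt (hmaps hu) (hmaps hv), hinv.2 hu, hinv.2 hv]

theorem StrictMonoOn.continuousOn_of_bijOn_Ici {α β : Type*} [LinearOrder α]
    [TopologicalSpace α] [OrderTopology α] [LinearOrder β] [TopologicalSpace β] [OrderTopology β]
    [DenselyOrdered β] {f : α → β} {a : α} {b : β} (hf : StrictMonoOn f (Ici a))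
    (hbij : BijOn f (Ici a) (Ici b)) : ContinuousOn f (Ici a) := by
  intro x hx
  have hfa : b ≤ f a := hbij.mapsTo self_mem_Ici
  rcases (mem_Ici.1 hx).eq_or_lt with rfl | hax
  · refine hf.continuousWithinAt_right_of_image_mem_nhdsWithin self_mem_nhdsWithin ?_
    rw [hbij.image_eq]
    exact mem_of_superset self_mem_nhdsWithin (Ici_subset_Ici.2 hfa)
  · refine (hf.continuousAt_of_image_mem_nhds (Ici_mem_nhds hax) ?_).continuousWithinAt
    rw [hbij.image_eq]
    exact Ici_mem_nhds (hfa.trans_lt (hf self_mem_Ici hx hax))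

noncomputable def laplaceTransform (φ : ℝ → ℝ) (s : ℝ) : ℝ :=
  ∫ u in Ioi (0 : ℝ), exp (-s * u) * φ u

theorem psiLaplace_eq_laplaceTransform_comp_invFunOn {Ψ : ℝ → ℝ} (hΨ : Differentiable ℝ Ψ)
    (hmono : StrictMonoOn Ψ (Ici 0)) (hbij : BijOn Ψ (Ici 0) (Ici 0)) (f : ℝ → ℝ) (s : ℝ) :
    psiLaplace Ψ f s = laplaceTransform (f ∘ invFunOn Ψ (Ici 0)) s := by
  have hderiv : ∀ t ∈ Ici (0 : ℝ), 0 ≤ deriv Ψ t := fun t ht => by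
    rw [← (hΨ t).derivWithin (uniqueDiffOn_Ici 0 t ht)]
    exact hmono.monotoneOn.derivWithin_nonneg
  have hcov := integral_image_eq_integral_abs_deriv_smul measurableSet_Ici
    (fun t _ => (hΨ t).hasDerivAt.hasDerivWithinAt) hmono.injOn
    (fun u => exp (-s * u) * (f ∘ invFunOn Ψ (Ici 0)) u)
  rw [hbij.image_eq] at hcov
  rw [psiLaplace, laplaceTransform, ← integral_Ici_eq_integral_Ioi,
    ← integral_Ici_eq_integral_Ioi, hcov]
  refine setIntegral_congr_fun measurableSet_Ici fun t ht => ?_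
  simp only [comp_apply, smul_eq_mul, abs_of_nonneg (hderiv t ht),
    hbij.invOn_invFunOn.1 ht]
  ring

theorem integral_Ioc_zero_one_eq_integral_Ici_exp_neg {E : Type*} [NormedAddCommGroup E]
    [NormedSpace ℝ E] (g : ℝ → E) :
    ∫ x in Ioc 0 1, g x = ∫ u in Ici 0, exp (-u) • g (exp (-u)) := by
  have himage : (fun u => exp (-u)) '' Ici 0 = Ioc 0 1 := by
    ext x
    refine ⟨?_, fun hx => ⟨-log x, ?_, ?_⟩⟩
    · rintro ⟨u, hu, rfl⟩
      exact ⟨exp_pos _, exp_le_one_iff.2 (neg_nonpos.2 hu)⟩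
    · exact neg_nonneg.2 (log_nonpos hx.1.le hx.2)
    · simp [exp_log hx.1]
  rw [← himage, integral_image_eq_integral_abs_deriv_smul measurableSet_Ici
    (fun u _ => ((hasDerivAt_neg u).exp).hasDerivWithinAt)
    (fun u _ v _ h => neg_injective (exp_injective h))]
  simp [abs_of_pos (exp_pos _)]

theorem eqOn_zero_of_forall_integral_pow_mul_eq_zero {ψ : ℝ → ℝ} {a b : ℝ} (hab : a ≠ b)
    (hψ : ContinuousOn ψ (Icc a b)) (h : ∀ n : ℕ, ∫ x in Icc a b, x ^ n * ψ x = 0) :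
    EqOn ψ 0 (Icc a b) := by
  have hint : ∀ p : Polynomial ℝ, IntegrableOn (fun x => p.eval x * ψ x) (Icc a b) :=
    fun p => (p.continuousOn.mul hψ).integrableOn_Icc
  have hint_pow : ∀ n : ℕ, IntegrableOn (fun x => x ^ n * ψ x) (Icc a b) :=
    fun n => ((continuous_pow n).continuousOn.mul hψ).integrableOn_Icc
  have hint_sq : IntegrableOn (fun x => ψ x ^ 2) (Icc a b) := (hψ.pow 2).integrableOn_Icc
  have hpoly : ∀ p : Polynomial ℝ, ∫ x in Icc a b, p.eval x * ψ x = 0 := by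
    intro p
    simp_rw [Polynomial.eval_eq_sum_range, Finset.sum_mul, mul_assoc]
    rw [integral_finsetSum _ fun i _ => (hint_pow i).const_mul _]
    simp [integral_const_mul, h]
  obtain ⟨B, hB⟩ := isCompact_Icc.exists_bound_of_continuousOn hψ
  have happrox : ∀ δ > 0, ∫ x in Icc a b, ψ x ^ 2 ≤ δ * (B * volume.real (Icc a b)) := by
    intro δ hδ
    obtain ⟨p, hp⟩ := exists_polynomial_near_of_continuousOn a b ψ hψ δ hδ
    have hsplit : ∫ x in Icc a b, ψ x ^ 2 = ∫ x in Icc a b, (ψ x - p.eval x) * ψ x := by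
      simp_rw [sub_mul, ← sq]
      rw [integral_sub hint_sq (hint p), hpoly, sub_zero]
    rw [hsplit, ← mul_assoc]
    refine (le_abs_self _).trans ?_
    rw [← Real.norm_eq_abs]
    refine norm_setIntegral_le_of_norm_le_const measure_Icc_lt_top ?_
    intro x hx
    rw [norm_mul, Real.norm_eq_abs, ← abs_sub_comm]
    exact mul_le_mul (hp x hx).le (hB x hx) (norm_nonneg _) hδ.le
  have hsq : ∫ x in Icc a b, ψ x ^ 2 = 0 := by
    refine le_antisymm ?_ (setIntegral_nonneg measurableSet_Icc fun x _ => sq_nonneg _)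
    refine ge_of_tendsto (x := 𝓝[>] (0 : ℝ)) ?_ (eventually_nhdsWithin_of_forall happrox)
    simpa using (tendsto_id.mul_const (B * volume.real (Icc a b))).mono_left
      (nhdsWithin_le_nhds (a := (0 : ℝ)))
  have hae : ψ =ᵐ[volume.restrict (Icc a b)] 0 := by
    rw [setIntegral_eq_zero_iff_of_nonneg_ae (Eventually.of_forall fun x => sq_nonneg _)
      hint_sq] at hsq
    filter_upwards [hsq] with x hx using pow_eq_zero_iff two_ne_zero |>.1 hx
  exact Measure.eqOn_Icc_of_ae_eq volume hab hae hψ continuousOn_const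

theorem continuousOn_rpow_mul_comp_neg_log {φ : ℝ → ℝ} {K c : ℝ} (hc : 0 < c)
    (hφ : ContinuousOn φ (Ici 0)) (hbound : ∀ u ≥ 0, |φ u| ≤ K * exp (c * u)) :
    ContinuousOn (fun x => x ^ (c + 1) * φ (-log x)) (Icc 0 1) := by
  have hmaps : MapsTo (fun x => -log x) (Icc 0 1) (Ici 0) :=
    fun x hx => neg_nonneg.2 (log_nonpos hx.1 hx.2)
  have hle : ∀ x ∈ Icc (0 : ℝ) 1, ‖x ^ (c + 1) * φ (-log x)‖ ≤ K * x := by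
    rintro x ⟨hx0, hx1⟩
    rcases hx0.eq_or_lt with rfl | hx0
    · simp [zero_rpow (by linarith : c + 1 ≠ 0)]
    calc ‖x ^ (c + 1) * φ (-log x)‖ ≤ x ^ (c + 1) * (K * exp (c * -log x)) := by
          rw [norm_mul, Real.norm_of_nonneg (rpow_nonneg hx0.le _)]
          exact mul_le_mul_of_nonneg_left (hbound _ (hmaps ⟨hx0.le, hx1⟩))
            (rpow_nonneg hx0.le _)
      _ = K * (x ^ (c + 1) * x ^ (-c)) := by
          rw [rpow_def_of_pos hx0 (-c), mul_comm (log x), mul_neg, neg_mul]; ring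
      _ = K * x := by rw [← rpow_add hx0]; simp
  intro x hx
  rcases hx.1.eq_or_lt with rfl | hx0
  · have hzero : (0 : ℝ) ^ (c + 1) * φ (-log 0) = 0 := by
      simp [zero_rpow (by linarith : c + 1 ≠ 0)]
    rw [ContinuousWithinAt, hzero]
    refine squeeze_zero_norm' (eventually_nhdsWithin_of_forall hle) ?_
    simpa using (tendsto_id.const_mul K).mono_left (nhdsWithin_le_nhds (a := (0 : ℝ)))
  · exact ((continuousAt_rpow_const x _ (Or.inl hx0.ne')).continuousWithinAt).mul
      ((hφ _ (hmaps hx)).comp (f := fun y => -log y)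
        (continuousAt_log hx0.ne').neg.continuousWithinAt hmaps)

theorem integrableOn_exp_neg_mul_mul_of_abs_le {φ : ℝ → ℝ} {K c s : ℝ}
    (hφ : ContinuousOn φ (Ici 0)) (hbound : ∀ u ≥ 0, |φ u| ≤ K * exp (c * u)) (hs : c < s) :
    IntegrableOn (fun u => exp (-s * u) * φ u) (Ioi 0) := by
  refine ((exp_neg_integrableOn_Ioi 0 (sub_pos.2 hs)).const_mul K).mono'
    (((continuous_exp.comp (continuous_const.mul continuous_id)).continuousOn.mul
      (hφ.mono Ioi_subset_Ici_self)).aestronglyMeasurable measurableSet_Ioi) ?_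
  refine (ae_restrict_iff' measurableSet_Ioi).2 (Eventually.of_forall fun u hu => ?_)
  calc ‖exp (-s * u) * φ u‖ ≤ exp (-s * u) * (K * exp (c * u)) := by
        rw [norm_mul, Real.norm_of_nonneg (exp_pos _).le]
        exact mul_le_mul_of_nonneg_left (hbound u hu.le) (exp_pos _).le
    _ = K * exp (-(s - c) * u) := by
        rw [mul_left_comm, ← exp_add]; ring_nf

theorem eqOn_zero_of_laplaceTransform_eq_zero {φ : ℝ → ℝ} {K c : ℝ}
    (hφ : ContinuousOn φ (Ici 0)) (hbound : ∀ u ≥ 0, |φ u| ≤ K * exp (c * u))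
    (h : ∀ s > c, laplaceTransform φ s = 0) : EqOn φ 0 (Ici 0) := by
  wlog hc : 0 < c generalizing c
  · have hK : 0 ≤ K := (abs_nonneg _).trans (by simpa using hbound 0 le_rfl)
    refine this (c := 1) (fun u hu => (hbound u hu).trans ?_) (fun s hs => h s (by linarith))
      one_pos
    exact mul_le_mul_of_nonneg_left (exp_le_exp.2 (by nlinarith)) hK
  set ψ : ℝ → ℝ := fun x => x ^ (c + 1) * φ (-log x) with hψ
  have hmoments : ∀ n : ℕ, ∫ x in Icc 0 1, x ^ n * ψ x = 0 := by
    intro n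
    rw [integral_Icc_eq_integral_Ioc, integral_Ioc_zero_one_eq_integral_Ici_exp_neg,
      integral_Ici_eq_integral_Ioi]
    refine Eq.trans (setIntegral_congr_fun measurableSet_Ioi fun u _ => ?_)
      (h (n + c + 2) (by linarith [n.cast_nonneg (α := ℝ)]))
    simp only [hψ, smul_eq_mul, log_exp, neg_neg]
    rw [← exp_nat_mul, rpow_def_of_pos (exp_pos _), log_exp, ← mul_assoc, ← mul_assoc,
      ← exp_add, ← exp_add]
    ring_nf
  have hψzero := eqOn_zero_of_forall_integral_pow_mul_eq_zero zero_ne_one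
    (continuousOn_rpow_mul_comp_neg_log hc hφ hbound) hmoments
  intro u hu
  have := hψzero ⟨(exp_pos (-u)).le, exp_le_one_iff.2 (neg_nonpos.2 hu)⟩
  simpa [hψ, (rpow_pos_of_pos (exp_pos (-u)) _).ne'] using this

theorem eqOn_of_laplaceTransform_eq {φ₁ φ₂ : ℝ → ℝ} {K c : ℝ}
    (hφ₁ : ContinuousOn φ₁ (Ici 0)) (hφ₂ : ContinuousOn φ₂ (Ici 0))
    (hbound₁ : ∀ u ≥ 0, |φ₁ u| ≤ K * exp (c * u)) (hbound₂ : ∀ u ≥ 0, |φ₂ u| ≤ K * exp (c * u))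
    (h : ∀ s > c, laplaceTransform φ₁ s = laplaceTransform φ₂ s) : EqOn φ₁ φ₂ (Ici 0) := by
  have hsub : ∀ s > c, laplaceTransform (φ₁ - φ₂) s = 0 := fun s hs => by
    simp only [laplaceTransform, Pi.sub_apply, mul_sub]
    rw [integral_sub (integrableOn_exp_neg_mul_mul_of_abs_le hφ₁ hbound₁ hs)
      (integrableOn_exp_neg_mul_mul_of_abs_le hφ₂ hbound₂ hs)]
    exact sub_eq_zero.2 (h s hs)
  have hbound : ∀ u ≥ 0, |(φ₁ - φ₂) u| ≤ (K + K) * exp (c * u) := fun u hu =>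
    (abs_sub _ _).trans (by linarith [hbound₁ u hu, hbound₂ u hu])
  intro u hu
  exact sub_eq_zero.1 (eqOn_zero_of_laplaceTransform_eq_zero (hφ₁.sub hφ₂) hbound hsub hu)

theorem generalised_laplace_uniqueness_general
    (Ψ f g : ℝ → ℝ) (c M : ℝ)
    (hΨC1 : ContDiff ℝ 1 Ψ)
    (hΨmono : StrictMonoOn Ψ (Ici 0))
    (hbij : BijOn Ψ (Ici 0) (Ici 0))
    (hf : ContinuousOn f (Ici 0)) (hg : ContinuousOn g (Ici 0))
    (hfbound : ∀ t ≥ (0:ℝ), |f t| ≤ M * Real.exp (c * Ψ t))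
    (hgbound : ∀ t ≥ (0:ℝ), |g t| ≤ M * Real.exp (c * Ψ t))
    (heq : ∀ s > c, psiLaplace Ψ f s = psiLaplace Ψ g s) :
    ∀ t ≥ (0:ℝ), f t = g t := by
  set ρ := invFunOn Ψ (Ici 0)
  have hinv : InvOn ρ Ψ (Ici 0) (Ici 0) := hbij.invOn_invFunOn
  have hρbij : BijOn ρ (Ici 0) (Ici 0) := hinv.symm.bijOn hbij.surjOn.mapsTo_invFunOn hbij.mapsTo
  have hρcont : ContinuousOn ρ (Ici 0) :=
    (hΨmono.strictMonoOn_invFunOn hbij).continuousOn_of_bijOn_Ici hρbij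
  have hbound : ∀ h : ℝ → ℝ, (∀ t ≥ 0, |h t| ≤ M * exp (c * Ψ t)) →
      ∀ u ≥ 0, |(h ∘ ρ) u| ≤ M * exp (c * u) := fun h hh u hu => by
    simpa only [comp_apply, hinv.2 hu] using hh _ (hρbij.mapsTo hu)
  have hlaplace : ∀ s > c, laplaceTransform (f ∘ ρ) s = laplaceTransform (g ∘ ρ) s := by
    have hΨ := hΨC1.differentiable one_ne_zero
    intro s hs
    rw [← psiLaplace_eq_laplaceTransform_comp_invFunOn hΨ hΨmono hbij,
      ← psiLaplace_eq_laplaceTransform_comp_invFunOn hΨ hΨmono hbij]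
    exact heq s hs
  have hfg := eqOn_of_laplaceTransform_eq (hf.comp hρcont hρbij.mapsTo)
    (hg.comp hρcont hρbij.mapsTo) (hbound f hfbound) (hbound g hgbound) hlaplace
  intro t ht
  simpa only [comp_apply, hinv.1 ht] using hfg (hbij.mapsTo ht)

theorem generalised_laplace_uniqueness
    (Ψ f g : ℝ → ℝ) (c M : ℝ)
    (hΨC1 : ContDiff ℝ 1 Ψ)
    (hΨmono : StrictMonoOn Ψ (Ici 0))
    (hΨ0 : Ψ 0 = 0)
    (hbij : BijOn Ψ (Ici 0) (Ici 0))
    (hf : ContinuousOn f (Ici 0)) (hg : ContinuousOn g (Ici 0))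
    (hc : 0 < c) (hM : 0 < M)
    (hfbound : ∀ t ≥ (0:ℝ), |f t| ≤ M * Real.exp (c * Ψ t))
    (hgbound : ∀ t ≥ (0:ℝ), |g t| ≤ M * Real.exp (c * Ψ t))
    (heq : ∀ s > c, psiLaplace Ψ f s = psiLaplace Ψ g s) :
    ∀ t ≥ (0:ℝ), f t = g t :=
  generalised_laplace_uniqueness_general Ψ f g c M hΨC1 hΨmono hbij hf hg hfbound hgbound heq
end

section
/- Ψ-convolution is associative: for f, g, h piecewise continuous of Ψ-exponential order and Ψ a C¹ increasing bijection of [0,∞) with Ψ(0)=0, (f *_Ψ g) *_Ψ h = f *_Ψ (g *_Ψ h). -/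
/-!
Substituting `u = Ψ τ` turns the Ψ-convolution into the Laplace convolution
`(F * G)(x) = ∫₀^x F (x - v) G v dv` of `F = f ∘ Ψ⁻¹` and `G = g ∘ Ψ⁻¹`, evaluated at `x = Ψ t`:
`(f *_Ψ g) ∘ Ψ⁻¹ = (f ∘ Ψ⁻¹) * (g ∘ Ψ⁻¹)` on `[0, ∞)`. Associativity of `*_Ψ` is thus that of the
Laplace convolution, which is Fubini's theorem on the triangle `0 ≤ u ≤ w ≤ x`.
-/

open MeasureTheory Real Set intervalIntegral

noncomputable def psiConv (Ψ Ψinv f g : ℝ → ℝ) (t : ℝ) : ℝ :=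
  ∫ τ in (0:ℝ)..t, f (Ψinv (Ψ t - Ψ τ)) * g τ * deriv Ψ τ

theorem ContinuousOn.exists_continuous_eqOn_Ici {α X : Type*} [LinearOrder α] [TopologicalSpace α]
    [OrderClosedTopology α] [TopologicalSpace X] {k : α → X} {a : α} (hk : ContinuousOn k (Ici a)) :
    ∃ K : α → X, Continuous K ∧ EqOn k K (Ici a) :=
  ⟨fun x => k (max x a), hk.comp_continuous (continuous_id.max continuous_const)
    fun x => le_max_right x a, fun x hx => by simp [max_eq_left (show a ≤ x from hx)]⟩

theorem MonotoneOn.continuousOn_Ici_of_surjOn {f : ℝ → ℝ} {a b : ℝ} (hf : MonotoneOn f (Ici a))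
    (hmaps : MapsTo f (Ici a) (Ici b)) (hsurj : SurjOn f (Ici a) (Ici b)) :
    ContinuousOn f (Ici a) := by
  let g : ℝ → Ici b := fun x => ⟨f (max x a), hmaps (le_max_right x a)⟩
  have hg_mono : Monotone g := fun x y hxy =>
    hf (le_max_right x a) (le_max_right y a) (max_le_max_right a hxy)
  have hg_surj : Function.Surjective g := fun y => by
    obtain ⟨x, hx, hfx⟩ := hsurj y.2
    exact ⟨x, Subtype.ext (by simp [g, max_eq_left (show a ≤ x from hx), hfx])⟩
  have hg_cont : Continuous g := hg_mono.continuous_of_surjective hg_surj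
  refine (continuous_subtype_val.comp hg_cont).continuousOn.congr fun x hx => ?_
  simp [g, max_eq_left (show a ≤ x from hx)]

theorem intervalIntegral_integral_triangle_swap {K : ℝ → ℝ → ℝ}
    (hK : Continuous (Function.uncurry K)) {a b : ℝ} (hab : a ≤ b) :
    ∫ u in a..b, ∫ w in u..b, K u w = ∫ w in a..b, ∫ u in a..w, K u w := by
  let T : Set (ℝ × ℝ) := {p | p.1 ≤ p.2}
  let φ : ℝ → ℝ → ℝ := fun u w => T.indicator (Function.uncurry K) (u, w)
  have hφ_int : IntegrableOn (Function.uncurry φ) (uIoc a b ×ˢ uIoc a b) :=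
    ((hK.continuousOn.integrableOn_compact (isCompact_uIcc.prod isCompact_uIcc)).indicator
      (isClosed_le continuous_fst continuous_snd).measurableSet).mono_set
      (prod_mono uIoc_subset_uIcc uIoc_subset_uIcc)
  have inner_w : ∀ u ∈ Ioc a b, ∫ w in a..b, φ u w = ∫ w in u..b, K u w := by
    intro u hu
    have hφu : (fun w => φ u w) = (Ici u).indicator (K u) := by
      ext w; by_cases h : u ≤ w <;> simp [φ, T, h]
    have hset : Ioc a b ∩ Ici u = Icc u b := by
      ext w; simp only [mem_inter_iff, mem_Ioc, mem_Ici, mem_Icc]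
      constructor
      · rintro ⟨⟨_, hwb⟩, huw⟩; exact ⟨huw, hwb⟩
      · rintro ⟨huw, hwb⟩; exact ⟨⟨hu.1.trans_le huw, hwb⟩, huw⟩
    rw [hφu, integral_of_le hab, integral_of_le hu.2, setIntegral_indicator measurableSet_Ici, hset,
      integral_Icc_eq_integral_Ioc]
  have inner_u : ∀ w ∈ Ioc a b, ∫ u in a..b, φ u w = ∫ u in a..w, K u w := by
    intro w hw
    have hφw : (fun u => φ u w) = (Iic w).indicator (fun u => K u w) := by
      ext u; by_cases h : u ≤ w <;> simp [φ, T, h]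
    rw [hφw, integral_of_le hab, integral_of_le hw.1.le, setIntegral_indicator measurableSet_Iic,
      Ioc_inter_Iic, min_eq_right hw.2]
  calc ∫ u in a..b, ∫ w in u..b, K u w = ∫ u in a..b, ∫ w in a..b, φ u w :=
        integral_congr_ae (Filter.Eventually.of_forall fun u hu =>
          (inner_w u (by rwa [uIoc_of_le hab] at hu)).symm)
    _ = ∫ w in a..b, ∫ u in a..b, φ u w := intervalIntegral_intervalIntegral_swap hφ_int
    _ = ∫ w in a..b, ∫ u in a..w, K u w :=
        integral_congr_ae (Filter.Eventually.of_forall fun w hw =>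
          inner_u w (by rwa [uIoc_of_le hab] at hw))

noncomputable def laplaceConv (F G : ℝ → ℝ) (x : ℝ) : ℝ :=
  ∫ v in (0:ℝ)..x, F (x - v) * G v

theorem continuous_laplaceConv {F G : ℝ → ℝ} (hF : Continuous F) (hG : Continuous G) :
    Continuous (laplaceConv F G) :=
  continuous_parametric_intervalIntegral_of_continuous (f := fun x v => F (x - v) * G v)
    ((hF.comp (continuous_fst.sub continuous_snd)).mul (hG.comp continuous_snd)) continuous_id

theorem laplaceConv_assoc {F G H : ℝ → ℝ} (hF : Continuous F) (hG : Continuous G)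
    (hH : Continuous H) {x : ℝ} (hx : 0 ≤ x) :
    laplaceConv (laplaceConv F G) H x = laplaceConv F (laplaceConv G H) x := by
  have shift : ∀ u, laplaceConv F G (x - u) = ∫ w in u..x, F (x - w) * G (w - u) := by
    intro u
    have h := integral_comp_sub_right (a := u) (b := x) (fun v => F (x - u - v) * G v) u
    simp only [sub_sub_sub_cancel_right, sub_self] at h
    exact h.symm
  show ∫ u in (0:ℝ)..x, laplaceConv F G (x - u) * H u =
    ∫ w in (0:ℝ)..x, F (x - w) * laplaceConv G H w
  simp only [shift, ← intervalIntegral.integral_mul_const]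
  rw [intervalIntegral_integral_triangle_swap (K := fun u w => F (x - w) * G (w - u) * H u)
    (((hF.comp (continuous_const.sub continuous_snd)).mul
      (hG.comp (continuous_snd.sub continuous_fst))).mul (hH.comp continuous_fst)) hx]
  simp only [laplaceConv, mul_assoc, intervalIntegral.integral_const_mul]

theorem psiConv_eq_laplaceConv {Ψ Ψinv a b A B : ℝ → ℝ} (hΨ : ContDiff ℝ 1 Ψ)
    (hΨmono : MonotoneOn Ψ (Ici 0)) (hΨ0 : Ψ 0 = 0) (hinv : LeftInvOn Ψinv Ψ (Ici 0))
    (hA : Continuous A) (hB : Continuous B) (haA : EqOn (a ∘ Ψinv) A (Ici 0))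
    (hbB : EqOn (b ∘ Ψinv) B (Ici 0)) {t : ℝ} (ht : 0 ≤ t) :
    psiConv Ψ Ψinv a b t = laplaceConv A B (Ψ t) := by
  have hintegrand : EqOn (fun τ => a (Ψinv (Ψ t - Ψ τ)) * b τ * deriv Ψ τ)
      (fun τ => deriv Ψ τ • ((fun u => A (Ψ t - u) * B u) ∘ Ψ) τ) (uIcc 0 t) := by
    intro τ hτ
    rw [uIcc_of_le ht] at hτ
    have ha : a (Ψinv (Ψ t - Ψ τ)) = A (Ψ t - Ψ τ) :=
      haA (show 0 ≤ Ψ t - Ψ τ from sub_nonneg.2 (hΨmono hτ.1 ht hτ.2))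
    have hb : b τ = B (Ψ τ) := by
      rw [← hbB (show 0 ≤ Ψ τ from hΨ0 ▸ hΨmono self_mem_Ici hτ.1 hτ.1), Function.comp_apply,
        hinv hτ.1]
    simp only [ha, hb, Function.comp_apply, smul_eq_mul]
    ring
  have hcont : Continuous fun u => A (Ψ t - u) * B u := by fun_prop
  rw [psiConv, integral_congr hintegrand,
    integral_deriv_smul_comp (fun τ _ => (hΨ.differentiable one_ne_zero τ).hasDerivAt)
      (hΨ.continuous_deriv le_rfl).continuousOn hcont, hΨ0]
  rfl

theorem psiConv_comp_eqOn_laplaceConv {Ψ Ψinv a b A B : ℝ → ℝ} (hΨ : ContDiff ℝ 1 Ψ)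
    (hΨmono : MonotoneOn Ψ (Ici 0)) (hΨ0 : Ψ 0 = 0) (hinv : InvOn Ψinv Ψ (Ici 0) (Ici 0))
    (hmaps : MapsTo Ψinv (Ici 0) (Ici 0)) (hA : Continuous A) (hB : Continuous B)
    (haA : EqOn (a ∘ Ψinv) A (Ici 0)) (hbB : EqOn (b ∘ Ψinv) B (Ici 0)) :
    EqOn (psiConv Ψ Ψinv a b ∘ Ψinv) (laplaceConv A B) (Ici 0) := fun u hu => by
  rw [Function.comp_apply, psiConv_eq_laplaceConv hΨ hΨmono hΨ0 hinv.1 hA hB haA hbB (hmaps hu),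
    hinv.2 hu]

theorem psi_convolution_assoc_general
    (Ψ Ψinv f g h : ℝ → ℝ)
    (hΨC1 : ContDiff ℝ 1 Ψ)
    (hΨmono : StrictMonoOn Ψ (Ici 0))
    (hΨ0 : Ψ 0 = 0)
    (hbij : BijOn Ψ (Ici 0) (Ici 0))
    (hinv : ∀ t ≥ (0:ℝ), Ψinv (Ψ t) = t)
    (hinv' : ∀ u ≥ (0:ℝ), Ψ (Ψinv u) = u)
    (hf : ContinuousOn f (Ici 0)) (hg : ContinuousOn g (Ici 0))
    (hh : ContinuousOn h (Ici 0)) :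
    ∀ t ≥ (0:ℝ), psiConv Ψ Ψinv (fun u => psiConv Ψ Ψinv f g u) h t =
      psiConv Ψ Ψinv f (fun u => psiConv Ψ Ψinv g h u) t := by
  intro t ht
  have hinvOn : InvOn Ψinv Ψ (Ici 0) (Ici 0) := ⟨hinv, hinv'⟩
  have hΨinv_bij : BijOn Ψinv (Ici 0) (Ici 0) := hbij.symm hinvOn.symm
  have hΨinv_mono : MonotoneOn Ψinv (Ici 0) := fun u hu v hv huv =>
    (hΨmono.le_iff_le (hΨinv_bij.mapsTo hu) (hΨinv_bij.mapsTo hv)).1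
      (by rwa [hinv' u hu, hinv' v hv])
  have hΨinv_cont : ContinuousOn Ψinv (Ici 0) :=
    hΨinv_mono.continuousOn_Ici_of_surjOn hΨinv_bij.mapsTo hΨinv_bij.surjOn
  obtain ⟨F, hFc, hF⟩ := (hf.comp hΨinv_cont hΨinv_bij.mapsTo).exists_continuous_eqOn_Ici
  obtain ⟨G, hGc, hG⟩ := (hg.comp hΨinv_cont hΨinv_bij.mapsTo).exists_continuous_eqOn_Ici
  obtain ⟨H, hHc, hH⟩ := (hh.comp hΨinv_cont hΨinv_bij.mapsTo).exists_continuous_eqOn_Ici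
  have hΨle := hΨmono.monotoneOn
  have hFG := psiConv_comp_eqOn_laplaceConv hΨC1 hΨle hΨ0 hinvOn hΨinv_bij.mapsTo hFc hGc hF hG
  have hGH := psiConv_comp_eqOn_laplaceConv hΨC1 hΨle hΨ0 hinvOn hΨinv_bij.mapsTo hGc hHc hG hH
  rw [psiConv_eq_laplaceConv hΨC1 hΨle hΨ0 hinv (continuous_laplaceConv hFc hGc) hHc hFG hH ht,
    psiConv_eq_laplaceConv hΨC1 hΨle hΨ0 hinv hFc (continuous_laplaceConv hGc hHc) hF hGH ht,
    laplaceConv_assoc hFc hGc hHc (hbij.mapsTo ht)]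

theorem psi_convolution_assoc
    (Ψ Ψinv f g h : ℝ → ℝ) (c M : ℝ)
    (hΨC1 : ContDiff ℝ 1 Ψ)
    (hΨmono : StrictMonoOn Ψ (Ici 0))
    (hΨ0 : Ψ 0 = 0)
    (hbij : BijOn Ψ (Ici 0) (Ici 0))
    (hinv : ∀ t ≥ (0:ℝ), Ψinv (Ψ t) = t)
    (hinv' : ∀ u ≥ (0:ℝ), Ψ (Ψinv u) = u)
    (hf : ContinuousOn f (Ici 0)) (hg : ContinuousOn g (Ici 0))
    (hh : ContinuousOn h (Ici 0))
    (hc : 0 < c) (hM : 0 < M)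
    (hfbound : ∀ t ≥ (0:ℝ), |f t| ≤ M * Real.exp (c * Ψ t))
    (hgbound : ∀ t ≥ (0:ℝ), |g t| ≤ M * Real.exp (c * Ψ t))
    (hhbound : ∀ t ≥ (0:ℝ), |h t| ≤ M * Real.exp (c * Ψ t)) :
    ∀ t ≥ (0:ℝ), psiConv Ψ Ψinv (fun u => psiConv Ψ Ψinv f g u) h t =
      psiConv Ψ Ψinv f (fun u => psiConv Ψ Ψinv g h u) t :=
  psi_convolution_assoc_general Ψ Ψinv f g h hΨC1 hΨmono hΨ0 hbij hinv hinv' hf hg hh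
end

section
/- The generalised Laplace transform converts Ψ-convolution to multiplication: if f, g are piecewise continuous of Ψ-exponential order c > 0 and Ψ is a C¹ increasing bijection of [0,∞) with Ψ(0)=0, then L_Ψ{f *_Ψ g}(s) = L_Ψ{f}(s) · L_Ψ{g}(s) for s > c. -/
/-!
The substitution `u = Ψ t` turns `L_Ψ{h}(s)` into the ordinary Laplace transform of `h ∘ Ψ⁻¹`,
and `(f *_Ψ g)(t)` into the ordinary one-sided convolution of `f ∘ Ψ⁻¹` and `g ∘ Ψ⁻¹` at `Ψ t`.
So the theorem is the classical convolution theorem for the Laplace transform. That one follows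
from `∫ (φ ⋆ ψ) = (∫ φ) (∫ ψ)` applied to `e^{-su} F(u)` and `e^{-su} G(u)` extended by zero to
`u ≤ 0`, because `e^{-su} = e^{-sv} e^{-s(u-v)}`; the bounds of exponential order `c < s` make
both integrable.
-/

open MeasureTheory Real Set intervalIntegral

open scoped Convolution

noncomputable def laplace (F : ℝ → ℝ) (s : ℝ) : ℝ :=
  ∫ u in Ioi (0 : ℝ), exp (-s * u) * F u

open ContinuousLinearMap in
theorem convolution_indicator_Ioi (φ ψ : ℝ → ℝ) (u : ℝ) :
    ((Ioi 0).indicator φ ⋆[mul ℝ ℝ] (Ioi 0).indicator ψ) u =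
      (Ioi 0).indicator (fun u => ∫ t in 0..u, φ t * ψ (u - t)) u := by
  have hsupp : (fun t => (Ioi 0).indicator φ t * (Ioi 0).indicator ψ (u - t)) =
      (Ioo 0 u).indicator (fun t => φ t * ψ (u - t)) := by
    ext t
    by_cases h0 : 0 < t <;> by_cases hu : t < u <;> simp [h0, hu, sub_pos]
  rw [convolution_mul, hsupp, MeasureTheory.integral_indicator measurableSet_Ioo]
  rcases lt_or_ge 0 u with hu | hu
  · rw [indicator_of_mem (mem_Ioi.2 hu), integral_of_le hu.le, integral_Ioc_eq_integral_Ioo]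
  · rw [indicator_of_notMem (notMem_Ioi.2 hu), Ioo_eq_empty (not_lt.2 hu), Measure.restrict_empty,
      integral_zero_measure]

theorem laplace_conv_eq_mul {F G : ℝ → ℝ} {s : ℝ}
    (hF : IntegrableOn (fun u => exp (-s * u) * F u) (Ioi 0))
    (hG : IntegrableOn (fun u => exp (-s * u) * G u) (Ioi 0)) :
    laplace (fun u => ∫ v in 0..u, F (u - v) * G v) s = laplace F s * laplace G s := by
  have hconv := integral_convolution (ContinuousLinearMap.mul ℝ ℝ) (μ := volume) (ν := volume)
    (hG.integrable_indicator measurableSet_Ioi) (hF.integrable_indicator measurableSet_Ioi)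
  simp only [convolution_indicator_Ioi, MeasureTheory.integral_indicator measurableSet_Ioi,
    ContinuousLinearMap.mul_apply'] at hconv
  rw [laplace, laplace, laplace, mul_comm, ← hconv]
  refine setIntegral_congr_fun measurableSet_Ioi fun u _ => ?_
  rw [← intervalIntegral.integral_const_mul]
  refine intervalIntegral.integral_congr fun v _ => ?_
  have hsplit : exp (-s * u) = exp (-s * v) * exp (-s * (u - v)) := by rw [← exp_add]; ring_nf
  simp only [hsplit]
  ring

theorem integrableOn_Ioi_exp_mul_of_abs_le {F : ℝ → ℝ} {c M s : ℝ}
    (hF : AEStronglyMeasurable F (volume.restrict (Ioi 0)))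
    (hbound : ∀ u > 0, |F u| ≤ M * exp (c * u)) (hs : c < s) :
    IntegrableOn (fun u => exp (-s * u) * F u) (Ioi 0) := by
  refine Integrable.mono' ((exp_neg_integrableOn_Ioi 0 (sub_pos.2 hs)).const_mul M)
    ((continuous_const.mul continuous_id).rexp.aestronglyMeasurable.mul hF) ?_
  filter_upwards [ae_restrict_mem measurableSet_Ioi] with u hu
  calc ‖exp (-s * u) * F u‖ = exp (-s * u) * |F u| := by
        rw [norm_mul, norm_of_nonneg (exp_pos _).le, norm_eq_abs]
    _ ≤ exp (-s * u) * (M * exp (c * u)) := by gcongr; exact hbound u hu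
    _ = M * exp (-(s - c) * u) := by rw [mul_left_comm, ← exp_add]; ring_nf

theorem StrictMonoOn.strictMonoOn_of_rightInvOn {α β : Type*} [LinearOrder α] [Preorder β]
    {f : α → β} {g : β → α} {s : Set α} {t : Set β} (hf : StrictMonoOn f s) (hg : MapsTo g t s)
    (hgf : RightInvOn g f t) : StrictMonoOn g t := fun _ hu _ hv huv =>
  (hf.lt_iff_lt (hg hu) (hg hv)).1 (by rwa [hgf hu, hgf hv])

theorem StrictMonoOn.continuousOn_Ici_of_image_eq {f : ℝ → ℝ} {a b : ℝ}
    (hf : StrictMonoOn f (Ici a)) (himage : f '' Ici a = Ici b) : ContinuousOn f (Ici a) := by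
  intro x hx
  have hba : b ≤ f a := himage.subset (mem_image_of_mem f self_mem_Ici)
  rcases (mem_Ici.1 hx).eq_or_lt with rfl | hax
  · refine continuousWithinAt_right_of_monotoneOn_of_image_mem_nhdsWithin hf.monotoneOn
      self_mem_nhdsWithin ?_
    rw [himage]
    exact Filter.mem_of_superset self_mem_nhdsWithin (Ici_subset_Ici.2 hba)
  · refine (continuousAt_of_monotoneOn_of_image_mem_nhds hf.monotoneOn (Ici_mem_nhds hax)
      ?_).continuousWithinAt
    rw [himage]
    exact Ici_mem_nhds (hba.trans_lt (hf self_mem_Ici hx hax))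

theorem Set.BijOn.image_Ioi_of_Ici {f : ℝ → ℝ} {a b : ℝ} (hf : BijOn f (Ici a) (Ici b))
    (hfa : f a = b) : f '' Ioi a = Ioi b := by
  rw [← Ici_sdiff_left, hf.injOn.image_sdiff_subset (singleton_subset_iff.2 self_mem_Ici),
    hf.image_eq, image_singleton, hfa, Ici_sdiff_left]

theorem psiLaplace_eq_laplace {Ψ h H : ℝ → ℝ} (hΨ : DifferentiableOn ℝ Ψ (Ioi 0))
    (hmono : MonotoneOn Ψ (Ioi 0)) (himage : Ψ '' Ioi 0 = Ioi 0) (hh : EqOn h (H ∘ Ψ) (Ioi 0))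
    (s : ℝ) : psiLaplace Ψ h s = laplace H s := by
  have hderiv : ∀ t ∈ Ioi (0 : ℝ), HasDerivWithinAt Ψ (deriv Ψ t) (Ioi 0) t := fun t ht =>
    ((hΨ t ht).differentiableAt (isOpen_Ioi.mem_nhds ht)).hasDerivAt.hasDerivWithinAt
  rw [laplace, ← himage,
    integral_image_eq_integral_deriv_smul_of_monotoneOn measurableSet_Ioi hderiv hmono, psiLaplace]
  refine setIntegral_congr_fun measurableSet_Ioi fun t ht => ?_
  rw [hh ht, smul_eq_mul, Function.comp_apply]
  ring

theorem psiConv_eq_intervalIntegral {Ψ Ψinv f g : ℝ → ℝ} (hΨc : ContinuousOn Ψ (Ici 0))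
    (hΨd : DifferentiableOn ℝ Ψ (Ioi 0)) (hmono : MonotoneOn Ψ (Ioi 0)) (hΨ0 : Ψ 0 = 0)
    (hinv : LeftInvOn Ψinv Ψ (Ici 0)) {t : ℝ} (ht : 0 ≤ t) :
    psiConv Ψ Ψinv f g t = ∫ v in 0..Ψ t, f (Ψinv (Ψ t - v)) * g (Ψinv v) := by
  have hIoo : Ioo (min 0 t) (max 0 t) ⊆ Ioi 0 := fun τ hτ => by
    simpa [min_eq_left ht] using hτ.1
  have hsubst := integral_deriv_smul_comp_of_deriv_nonneg
    (f := Ψ) (f' := deriv Ψ) (g := fun v => f (Ψinv (Ψ t - v)) * g (Ψinv v))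
    (hΨc.mono (uIcc_of_le ht ▸ Icc_subset_Ici_self))
    (fun τ hτ => ((hΨd τ (hIoo hτ)).differentiableAt (isOpen_Ioi.mem_nhds (hIoo hτ))).hasDerivAt)
    (fun τ hτ => by
      rw [← derivWithin_of_isOpen isOpen_Ioi (hIoo hτ)]; exact hmono.derivWithin_nonneg)
  rw [hΨ0] at hsubst
  rw [← hsubst, psiConv]
  refine intervalIntegral.integral_congr fun τ hτ => ?_
  rw [uIcc_of_le ht] at hτ
  simp only [smul_eq_mul, Function.comp_apply, hinv hτ.1]
  ring

theorem generalised_laplace_of_psi_convolution_general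
    (Ψ Ψinv f g : ℝ → ℝ) (c M : ℝ)
    (hΨC1 : ContDiff ℝ 1 Ψ)
    (hΨmono : StrictMonoOn Ψ (Ici 0))
    (hΨ0 : Ψ 0 = 0)
    (hbij : BijOn Ψ (Ici 0) (Ici 0))
    (hinv : ∀ t ≥ (0:ℝ), Ψinv (Ψ t) = t)
    (hinv' : ∀ u ≥ (0:ℝ), Ψ (Ψinv u) = u)
    (hf : ContinuousOn f (Ici 0)) (hg : ContinuousOn g (Ici 0))
    (hfbound : ∀ t ≥ (0:ℝ), |f t| ≤ M * Real.exp (c * Ψ t))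
    (hgbound : ∀ t ≥ (0:ℝ), |g t| ≤ M * Real.exp (c * Ψ t)) :
    ∀ s > c, psiLaplace Ψ (fun t => psiConv Ψ Ψinv f g t) s =
      psiLaplace Ψ f s * psiLaplace Ψ g s := by
  intro s hs
  have hΨd : Differentiable ℝ Ψ := hΨC1.differentiable one_ne_zero
  have hmono : MonotoneOn Ψ (Ioi 0) := hΨmono.monotoneOn.mono Ioi_subset_Ici_self
  have himage : Ψ '' Ioi 0 = Ioi 0 := hbij.image_Ioi_of_Ici hΨ0
  have hinvBij : BijOn Ψinv (Ici 0) (Ici 0) := hbij.symm ⟨hinv', hinv⟩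
  have hinvCont : ContinuousOn Ψinv (Ici 0) :=
    (hΨmono.strictMonoOn_of_rightInvOn hinvBij.mapsTo hinv').continuousOn_Ici_of_image_eq
      hinvBij.image_eq
  have hintegrable : ∀ h : ℝ → ℝ, ContinuousOn h (Ici 0) →
      (∀ t ≥ (0:ℝ), |h t| ≤ M * exp (c * Ψ t)) →
      IntegrableOn (fun u => exp (-s * u) * h (Ψinv u)) (Ioi 0) := fun h hcont hbound =>
    integrableOn_Ioi_exp_mul_of_abs_le
      (((hcont.comp hinvCont hinvBij.mapsTo).mono Ioi_subset_Ici_self).aestronglyMeasurable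
        measurableSet_Ioi)
      (fun u hu => by simpa only [hinv' u hu.le] using hbound _ (hinvBij.mapsTo hu.le)) hs
  have hpsiLaplace : ∀ h : ℝ → ℝ, psiLaplace Ψ h s = laplace (h ∘ Ψinv) s := fun h =>
    psiLaplace_eq_laplace hΨd.differentiableOn hmono himage
      (fun t ht => by simp only [Function.comp_apply, hinv t (le_of_lt ht)]) s
  rw [psiLaplace_eq_laplace hΨd.differentiableOn hmono himage
    (H := fun u => ∫ v in 0..u, f (Ψinv (u - v)) * g (Ψinv v)) (fun t ht => psiConv_eq_intervalIntegral hΨd.continuous.continuousOn hΨd.differentiableOn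
      hmono hΨ0 hinv (le_of_lt ht)) s, hpsiLaplace f, hpsiLaplace g]
  exact laplace_conv_eq_mul (hintegrable f hf hfbound) (hintegrable g hg hgbound)

theorem generalised_laplace_of_psi_convolution
    (Ψ Ψinv f g : ℝ → ℝ) (c M : ℝ)
    (hΨC1 : ContDiff ℝ 1 Ψ)
    (hΨmono : StrictMonoOn Ψ (Ici 0))
    (hΨ0 : Ψ 0 = 0)
    (hbij : BijOn Ψ (Ici 0) (Ici 0))
    (hinv : ∀ t ≥ (0:ℝ), Ψinv (Ψ t) = t)
    (hinv' : ∀ u ≥ (0:ℝ), Ψ (Ψinv u) = u)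
    (hf : ContinuousOn f (Ici 0)) (hg : ContinuousOn g (Ici 0))
    (hc : 0 < c) (hM : 0 < M)
    (hfbound : ∀ t ≥ (0:ℝ), |f t| ≤ M * Real.exp (c * Ψ t))
    (hgbound : ∀ t ≥ (0:ℝ), |g t| ≤ M * Real.exp (c * Ψ t)) :
    ∀ s > c, psiLaplace Ψ (fun t => psiConv Ψ Ψinv f g t) s =
      psiLaplace Ψ f s * psiLaplace Ψ g s :=
  generalised_laplace_of_psi_convolution_general Ψ Ψinv f g c M hΨC1 hΨmono hΨ0 hbij hinv hinv' hf
    hg hfbound hgbound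
end
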